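/- arXiv:1610.01690 — 3 statements merged into one kernel-verified Lean document; each statement's English description precedes it below -/
import Mathlib

section
/- For tensors X ∈ ℝ^{m×r×k} and Y ∈ ℝ^{r×n×k}, the Frobenius norm of their t-product satisfies ‖X * Y‖_F = (1/√k) ‖X^c Y^c‖_F, where X^c ∈ ℝ^{mk×rk} and Y^c ∈ ℝ^{rk×nk} are the block circulant matrix representations of X and Y. -/
open scoped BigOperators

/-- Circular convolution of two length-`k` tubes. -/
def tubeConv {k : ℕ} [NeZero k] (a b : ZMod k → ℝ) : ZMod k → ℝ :=
  fun i => ∑ s : ZMod k, a s * b (i - s)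

/-- The t-product of third-order tensors, represented as
`Fin m → Fin r → (ZMod k → ℝ)` (an `m × r` array of length-`k` tubes). -/
def tProd {k m r n : ℕ} [NeZero k] (X : Fin m → Fin r → ZMod k → ℝ)
    (Y : Fin r → Fin n → ZMod k → ℝ) : Fin m → Fin n → ZMod k → ℝ :=
  fun i j t => ∑ s : Fin r, tubeConv (X i s) (Y s j) t

/-- Frobenius norm of a third-order tensor. -/
noncomputable def frob3 {k m n : ℕ} [NeZero k] (T : Fin m → Fin n → ZMod k → ℝ) : ℝ :=
  Real.sqrt (∑ i : Fin m, ∑ j : Fin n, ∑ t : ZMod k, (T i j t) ^ 2)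

/-- Block circulant matrix representation of a third-order tensor: each tube
`X(i,s,:)` is replaced by its `k × k` circulant matrix. -/
def bcirc {k m n : ℕ} [NeZero k] (X : Fin m → Fin n → ZMod k → ℝ) :
    Matrix (Fin m × ZMod k) (Fin n × ZMod k) ℝ :=
  Matrix.of fun p q => X p.1 q.1 (p.2 - q.2)

/-- Frobenius norm of a matrix. -/
noncomputable def frobM {α β : Type*} [Fintype α] [Fintype β] (M : Matrix α β ℝ) : ℝ :=
  Real.sqrt (∑ i : α, ∑ j : β, (M i j) ^ 2)

lemma bcirc_mul_apply {k m r n : ℕ} [NeZero k]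
    (X : Fin m → Fin r → ZMod k → ℝ) (Y : Fin r → Fin n → ZMod k → ℝ)
    (p : Fin m × ZMod k) (q : Fin n × ZMod k) :
    (bcirc X * bcirc Y) p q = tProd X Y p.1 q.1 (p.2 - q.2) := by
  simp only [Matrix.mul_apply, bcirc, tProd, tubeConv, Matrix.of_apply,
    Fintype.sum_prod_type]
  refine Finset.sum_congr rfl fun s _ => ?_
  -- inner: ∑ w, X p.1 s (p.2 - w) * Y s q.1 (w - q.2)
  --      = ∑ v, X p.1 s v * Y s q.1 (p.2 - q.2 - v)
  rw [← Equiv.sum_comp (Equiv.subLeft p.2) (fun v => X p.1 s v * Y s q.1 (p.2 - q.2 - v))]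
  refine Finset.sum_congr rfl fun w _ => ?_
  simp only [Equiv.subLeft_apply]
  ring_nf

lemma sum_shift {k : ℕ} [NeZero k] (f : ZMod k → ℝ) (u : ZMod k) :
    ∑ t : ZMod k, f (t - u) = ∑ t : ZMod k, f t := by
  rw [← Equiv.sum_comp (Equiv.subRight u) f]
  rfl

/-- The Frobenius norm of a t-product equals `1/√k` times the Frobenius norm of
the product of the block circulant representations. -/
theorem frob_tprod_eq_frob_bcirc_mul {k m r n : ℕ} [NeZero k]
    (X : Fin m → Fin r → ZMod k → ℝ) (Y : Fin r → Fin n → ZMod k → ℝ) :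
    frob3 (tProd X Y) = (1 / Real.sqrt k) * frobM (bcirc X * bcirc Y) := by
  set T := tProd X Y with hT
  have key : ∑ p : Fin m × ZMod k, ∑ q : Fin n × ZMod k,
      ((bcirc X * bcirc Y) p q) ^ 2
      = (k : ℝ) * ∑ i : Fin m, ∑ j : Fin n, ∑ t : ZMod k, (T i j t) ^ 2 := by
    simp only [bcirc_mul_apply, ← hT]
    rw [Fintype.sum_prod_type, Finset.mul_sum]
    refine Finset.sum_congr rfl fun i _ => ?_
    calc ∑ p2 : ZMod k, ∑ q : Fin n × ZMod k, T i q.1 (p2 - q.2) ^ 2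
        = ∑ q : Fin n × ZMod k, ∑ p2 : ZMod k, T i q.1 (p2 - q.2) ^ 2 := Finset.sum_comm
      _ = ∑ q : Fin n × ZMod k, ∑ t : ZMod k, T i q.1 t ^ 2 := by
          refine Finset.sum_congr rfl fun q _ => sum_shift (fun t => T i q.1 t ^ 2) q.2
      _ = ∑ j : Fin n, ∑ _u : ZMod k, ∑ t : ZMod k, T i j t ^ 2 := by
          rw [Fintype.sum_prod_type]
      _ = (k : ℝ) * ∑ j : Fin n, ∑ t : ZMod k, T i j t ^ 2 := by
          simp [Finset.mul_sum, ZMod.card]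
  have hk : (0:ℝ) < Real.sqrt k := Real.sqrt_pos.2 (by exact_mod_cast Nat.pos_of_ne_zero (NeZero.ne k))
  have hknn : (0:ℝ) ≤ (k:ℝ) := by positivity
  rw [frob3, frobM, key, Real.sqrt_mul hknn, one_div, ← mul_assoc,
    inv_mul_cancel₀ hk.ne', one_mul]
end

section
/- The tensor spectral norm of a third-order tensor X ∈ ℝ^{m×n×k} equals the matrix spectral norm of its block circulant representation X^c ∈ ℝ^{mk×nk}, and also equals the spectral norm of the block diagonal matrix blkdiag(X̃) formed from the frontal slices of the DFT of X along the third mode. -/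
open scoped BigOperators Matrix

/-- Tensor spectral norm: `‖X‖ = sup {‖X * L‖_F : ‖L‖_F ≤ 1}`. -/
noncomputable def tSpec {k m n : ℕ} [NeZero k] (X : Fin m → Fin n → ZMod k → ℝ) : ℝ :=
  sSup {c : ℝ | ∃ L : Fin n → Fin n → ZMod k → ℝ, frob3 L ≤ 1 ∧ c = frob3 (tProd X L)}

/-- Matrix spectral (operator) norm, over `ℝ` or `ℂ`. -/
noncomputable def matSpec {𝕜 : Type*} [RCLike 𝕜] {α β : Type*}
    [Fintype α] [Fintype β] [DecidableEq β] (M : Matrix α β 𝕜) : ℝ :=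
  ‖LinearMap.toContinuousLinearMap (Matrix.toEuclideanLin M)‖

/-- Unnormalized DFT of a real tube, with `ω = exp(-2πi/k)`. -/
noncomputable def dftTube {k : ℕ} [NeZero k] (a : ZMod k → ℝ) : ZMod k → ℂ :=
  fun ℓ => ∑ t : ZMod k, (a t : ℂ) * Complex.exp (-2 * Real.pi * Complex.I / k) ^ (t.val * ℓ.val)

/-- Block diagonal matrix formed from the frontal slices of the DFT of `X`
along the third mode. -/
noncomputable def blkdiag {k m n : ℕ} [NeZero k] (X : Fin m → Fin n → ZMod k → ℝ) :
    Matrix (Fin m × ZMod k) (Fin n × ZMod k) ℂ :=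
  Matrix.of fun p q => if p.2 = q.2 then dftTube (X p.1 q.1) p.2 else 0

/-!
Unfolding each lateral slice `L(:, j, :)` into a vector of `ℝ^{nk}` turns the t-product into
multiplication by `X^c`, slice by slice, and the Frobenius norm into the `ℓ²`-norm of the family of
slices; so `‖X‖` is the supremum of `(∑ⱼ ‖X^c vⱼ‖²)^{1/2}` over families with `∑ⱼ ‖vⱼ‖² ≤ 1`, which
is the operator norm of `X^c`. The DFT matrix `F` diagonalises every circulant,
`F circ(a) = diag(F a) F`, so `(I ⊗ F) X^c = blkdiag(X̃) (I ⊗ F)`; as `F / √k` is unitary, `X^c`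
(whose spectral norm does not change when it is read as a complex matrix) and `blkdiag(X̃)` have the
same spectral norm.
-/

lemma EuclideanSpace.norm_sq_eq_norm_sq_re_add_norm_sq_im {β : Type*} [Fintype β]
    (x : EuclideanSpace ℂ β) :
    ‖x‖ ^ 2 = ‖WithLp.toLp 2 fun i => (x i).re‖ ^ 2 + ‖WithLp.toLp 2 fun i => (x i).im‖ ^ 2 := by
  simp only [EuclideanSpace.norm_sq_eq, ← Finset.sum_add_distrib, Complex.sq_norm,
    Complex.normSq_apply, Real.norm_eq_abs, sq_abs]
  simp only [sq]

lemma ContinuousLinearMap.sSup_sqrt_sum_norm_sq_apply {𝕜 E F ι : Type*}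
    [DenselyNormedField 𝕜] [NormedAddCommGroup E] [NormedSpace 𝕜 E]
    [SeminormedAddCommGroup F] [NormedSpace 𝕜 F] [Fintype ι] [Nonempty ι] (f : E →L[𝕜] F) :
    sSup {c : ℝ | ∃ v : ι → E, √(∑ i, ‖v i‖ ^ 2) ≤ 1 ∧ c = √(∑ i, ‖f (v i)‖ ^ 2)} = ‖f‖ := by
  classical
  have hle : ∀ c ∈ {c : ℝ | ∃ v : ι → E, √(∑ i, ‖v i‖ ^ 2) ≤ 1 ∧ c = √(∑ i, ‖f (v i)‖ ^ 2)},
      c ≤ ‖f‖ := by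
    rintro - ⟨v, hv, rfl⟩
    calc √(∑ i, ‖f (v i)‖ ^ 2) ≤ √(‖f‖ ^ 2 * ∑ i, ‖v i‖ ^ 2) := by
          rw [Finset.mul_sum]
          gcongr with i
          rw [← mul_pow]
          gcongr
          exact f.le_opNorm _
      _ = ‖f‖ * √(∑ i, ‖v i‖ ^ 2) := by
          rw [Real.sqrt_mul (sq_nonneg _), Real.sqrt_sq (norm_nonneg _)]
      _ ≤ ‖f‖ := mul_le_of_le_one_right (norm_nonneg _) hv
  obtain ⟨i₀⟩ := ‹Nonempty ι›
  refine le_antisymm (csSup_le ⟨_, 0, by simp, rfl⟩ hle) ?_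
  rw [← f.sSup_unitClosedBall_eq_norm]
  refine csSup_le_csSup ⟨‖f‖, hle⟩ ((Metric.nonempty_closedBall.mpr zero_le_one).image _) ?_
  rintro - ⟨x, hx, rfl⟩
  refine ⟨fun i => if i = i₀ then x else 0, ?_, ?_⟩
  · simpa [apply_ite norm] using hx
  · simp [apply_ite norm, apply_ite f]

namespace Matrix

open scoped Matrix.Norms.L2Operator

variable {𝕜 : Type*} [RCLike 𝕜] {α β γ : Type*} [Fintype α] [Fintype β] [Fintype γ]

lemma l2_opNorm_mul_of_conjTranspose_mul_self_eq_one [DecidableEq β] [DecidableEq γ]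
    {U : Matrix α β 𝕜} (hU : Uᴴ * U = 1) (A : Matrix β γ 𝕜) : ‖U * A‖ = ‖A‖ := by
  have h : ‖U * A‖ * ‖U * A‖ = ‖A‖ * ‖A‖ := by
    rw [← l2_opNorm_conjTranspose_mul_self, ← l2_opNorm_conjTranspose_mul_self, conjTranspose_mul,
      Matrix.mul_assoc, ← Matrix.mul_assoc Uᴴ, hU, Matrix.one_mul]
  exact (mul_self_inj (norm_nonneg _) (norm_nonneg _)).mp h

lemma l2_opNorm_mul_of_mul_conjTranspose_self_eq_one [DecidableEq α] [DecidableEq β]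
    [DecidableEq γ] {V : Matrix β γ 𝕜} (hV : V * Vᴴ = 1) (A : Matrix α β 𝕜) : ‖A * V‖ = ‖A‖ := by
  rw [← l2_opNorm_conjTranspose, conjTranspose_mul,
    l2_opNorm_mul_of_conjTranspose_mul_self_eq_one (by rwa [conjTranspose_conjTranspose]),
    l2_opNorm_conjTranspose]

lemma l2_opNorm_eq_of_mul_eq_mul_of_mem_unitaryGroup [DecidableEq α] [DecidableEq β]
    {U : Matrix α α 𝕜} {V : Matrix β β 𝕜} (hU : U ∈ unitaryGroup α 𝕜) (hV : V ∈ unitaryGroup β 𝕜)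
    {A B : Matrix α β 𝕜} (h : U * A = B * V) : ‖A‖ = ‖B‖ := by
  rw [← l2_opNorm_mul_of_conjTranspose_mul_self_eq_one (mem_unitaryGroup_iff'.mp hU) A, h,
    l2_opNorm_mul_of_mul_conjTranspose_self_eq_one (mem_unitaryGroup_iff.mp hV)]

lemma l2_opNorm_map_ofReal [DecidableEq β] (M : Matrix α β ℝ) :
    ‖M.map ((↑) : ℝ → ℂ)‖ = ‖M‖ := by
  set f := (toEuclideanLin.trans LinearMap.toContinuousLinearMap) M
  set g := (toEuclideanLin.trans LinearMap.toContinuousLinearMap) (M.map ((↑) : ℝ → ℂ))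
  have hsplit : ∀ x : EuclideanSpace ℂ β, ‖g x‖ ^ 2 =
      ‖f (WithLp.toLp 2 fun i => (x i).re)‖ ^ 2 + ‖f (WithLp.toLp 2 fun i => (x i).im)‖ ^ 2 := by
    intro x
    rw [EuclideanSpace.norm_sq_eq_norm_sq_re_add_norm_sq_im]
    congr 3 <;> ext i <;> simp [f, g, mulVec, dotProduct, Complex.re_sum, Complex.im_sum]
  refine le_antisymm (g.opNorm_le_bound (norm_nonneg f) fun x => ?_)
    (f.opNorm_le_bound (norm_nonneg g) fun y => ?_)
  · refine (sq_le_sq₀ (norm_nonneg _) (by positivity)).mp ?_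
    calc ‖g x‖ ^ 2
        = ‖f (WithLp.toLp 2 fun i => (x i).re)‖ ^ 2 + ‖f (WithLp.toLp 2 fun i => (x i).im)‖ ^ 2 :=
          hsplit x
      _ ≤ (‖f‖ * ‖WithLp.toLp 2 fun i => (x i).re‖) ^ 2 +
            (‖f‖ * ‖WithLp.toLp 2 fun i => (x i).im‖) ^ 2 := by
          gcongr <;> exact f.le_opNorm _
      _ = (‖f‖ * ‖x‖) ^ 2 := by
          rw [mul_pow, mul_pow, mul_pow, EuclideanSpace.norm_sq_eq_norm_sq_re_add_norm_sq_im x]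
          ring
  · set x : EuclideanSpace ℂ β := WithLp.toLp 2 fun i => (y i : ℂ)
    have hx : ‖x‖ = ‖y‖ := by
      rw [← sq_eq_sq₀ (norm_nonneg _) (norm_nonneg _),
        EuclideanSpace.norm_sq_eq_norm_sq_re_add_norm_sq_im]
      simp [x, ← Pi.zero_def]
    have hgx : ‖g x‖ = ‖f y‖ := by
      rw [← sq_eq_sq₀ (norm_nonneg _) (norm_nonneg _), hsplit]
      simp [x, ← Pi.zero_def]
    rw [← hx, ← hgx]
    exact g.le_opNorm x

end Matrix

namespace TProduct

open Matrix ZMod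
open scoped Kronecker Matrix.Norms.L2Operator

variable {k m n r : ℕ} [NeZero k]

def lateralSliceVec (L : Fin r → Fin n → ZMod k → ℝ) (j : Fin n) :
    EuclideanSpace ℝ (Fin r × ZMod k) :=
  WithLp.toLp 2 fun p => L p.1 j p.2

lemma frob3_eq_sqrt_sum_norm_sq_lateralSliceVec (L : Fin r → Fin n → ZMod k → ℝ) :
    frob3 L = √(∑ j, ‖lateralSliceVec L j‖ ^ 2) := by
  simp only [frob3, EuclideanSpace.norm_sq_eq, lateralSliceVec, Real.norm_eq_abs, sq_abs,
    Fintype.sum_prod_type]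
  rw [Finset.sum_comm]

lemma lateralSliceVec_tProd (X : Fin m → Fin r → ZMod k → ℝ) (L : Fin r → Fin n → ZMod k → ℝ)
    (j : Fin n) :
    lateralSliceVec (tProd X L) j = toEuclideanLin (bcirc X) (lateralSliceVec L j) := by
  ext ⟨i, t⟩
  simp only [lateralSliceVec, tProd, tubeConv, toLpLin_apply, mulVec, dotProduct, bcirc, of_apply,
    Fintype.sum_prod_type]
  refine Finset.sum_congr rfl fun s _ => Fintype.sum_equiv (Equiv.subLeft t) _ _ fun u => ?_
  simp

lemma tSpec_eq_sSup (X : Fin m → Fin n → ZMod k → ℝ) :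
    tSpec X = sSup {c : ℝ | ∃ v : Fin n → EuclideanSpace ℝ (Fin n × ZMod k),
      √(∑ j, ‖v j‖ ^ 2) ≤ 1 ∧
        c = √(∑ j, ‖LinearMap.toContinuousLinearMap (toEuclideanLin (bcirc X)) (v j)‖ ^ 2)} := by
  rw [tSpec]
  congr 1
  ext c
  constructor
  · rintro ⟨L, hL, rfl⟩
    refine ⟨lateralSliceVec L, ?_, ?_⟩
    · rwa [← frob3_eq_sqrt_sum_norm_sq_lateralSliceVec]
    · simp_rw [frob3_eq_sqrt_sum_norm_sq_lateralSliceVec, lateralSliceVec_tProd]; rfl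
  · rintro ⟨v, hv, rfl⟩
    refine ⟨fun i j t => v j (i, t), ?_, ?_⟩
    · rwa [frob3_eq_sqrt_sum_norm_sq_lateralSliceVec]
    · simp_rw [frob3_eq_sqrt_sum_norm_sq_lateralSliceVec, lateralSliceVec_tProd]; rfl

lemma tSpec_eq_matSpec_bcirc (X : Fin m → Fin n → ZMod k → ℝ) : tSpec X = matSpec (bcirc X) := by
  rcases isEmpty_or_nonempty (Fin n) with hn | hn
  · simp [tSpec, frob3, matSpec, ContinuousLinearMap.opNorm_subsingleton]
  · rw [tSpec_eq_sSup, ContinuousLinearMap.sSup_sqrt_sum_norm_sq_apply]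
    rfl

lemma exp_pow_val_mul_val (t ℓ : ZMod k) :
    Complex.exp (-2 * Real.pi * Complex.I / k) ^ (t.val * ℓ.val) = stdAddChar (-(t * ℓ)) := by
  have : -(t * ℓ) = ((-(t.val * ℓ.val : ℤ) : ℤ) : ZMod k) := by push_cast; simp
  rw [this, stdAddChar_coe, ← Complex.exp_nat_mul]
  congr 1
  push_cast
  ring

lemma dftTube_eq_dft (a : ZMod k → ℝ) : dftTube a = 𝓕 fun t => (a t : ℂ) := by
  ext ℓ
  refine Finset.sum_congr rfl fun t _ => ?_
  rw [exp_pow_val_mul_val, smul_eq_mul, mul_comm]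

noncomputable def dftMatrix (k : ℕ) [NeZero k] : Matrix (ZMod k) (ZMod k) ℂ :=
  of fun ℓ t => stdAddChar (-(t * ℓ))

lemma dftMatrix_conjTranspose_mul_self : (dftMatrix k)ᴴ * dftMatrix k = (k : ℂ) • 1 := by
  ext s t
  have hψ : ∀ ℓ, star (dftMatrix k ℓ s) * dftMatrix k ℓ t = stdAddChar (ℓ * (s - t)) := by
    intro ℓ
    rw [dftMatrix, of_apply, of_apply, Complex.star_def, ← AddChar.map_neg_eq_conj,
      ← AddChar.map_add_eq_mul]
    ring_nf
  rw [mul_apply]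
  simp only [conjTranspose_apply, hψ, AddChar.sum_mulShift _ (isPrimitive_stdAddChar k),
    sub_eq_zero, Matrix.smul_apply, one_apply, card]
  simp

lemma inv_sqrt_smul_dftMatrix_mem_unitaryGroup :
    ((√k : ℂ)⁻¹ • dftMatrix k) ∈ unitaryGroup (ZMod k) ℂ := by
  have hk : ((√k : ℝ) : ℂ) ^ 2 = k := by
    rw [← Complex.ofReal_pow, Real.sq_sqrt (Nat.cast_nonneg k)]; norm_cast
  rw [mem_unitaryGroup_iff', star_smul, star_eq_conjTranspose, smul_mul_smul,
    dftMatrix_conjTranspose_mul_self, smul_smul, star_inv₀, Complex.star_def, Complex.conj_ofReal,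
    ← sq, inv_pow, hk, inv_mul_cancel₀ (by exact_mod_cast NeZero.ne k), one_smul]

lemma dftMatrix_mul_circulant (a : ZMod k → ℂ) :
    dftMatrix k * circulant a = diagonal (𝓕 a) * dftMatrix k := by
  ext ℓ t
  rw [diagonal_mul, mul_apply, dft_apply, Finset.sum_mul]
  refine Fintype.sum_equiv (Equiv.subRight t) _ _ fun s => ?_
  rw [dftMatrix, of_apply, of_apply, circulant_apply, Equiv.subRight_apply,
    show -(s * ℓ) = -((s - t) * ℓ) + -(t * ℓ) by ring, AddChar.map_add_eq_mul, smul_eq_mul]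
  ring

lemma one_kronecker_dftMatrix_mul_bcirc (X : Fin m → Fin n → ZMod k → ℝ) :
    ((1 : Matrix (Fin m) (Fin m) ℂ) ⊗ₖ dftMatrix k) * (bcirc X).map ((↑) : ℝ → ℂ) =
      blkdiag X * ((1 : Matrix (Fin n) (Fin n) ℂ) ⊗ₖ dftMatrix k) := by
  ext ⟨i, ℓ⟩ ⟨j, t⟩
  have h := congr_fun₂ (dftMatrix_mul_circulant fun s => (X i j s : ℂ)) ℓ t
  rw [← dftTube_eq_dft, diagonal_mul] at h
  simpa [Matrix.mul_apply, Fintype.sum_prod_type, one_apply, bcirc, blkdiag, kroneckerMap_apply,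
    circulant_apply] using h

lemma matSpec_blkdiag (X : Fin m → Fin n → ZMod k → ℝ) :
    matSpec (blkdiag X) = matSpec (bcirc X) := by
  show ‖blkdiag X‖ = ‖bcirc X‖
  have hU {p : ℕ} : (1 : Matrix (Fin p) (Fin p) ℂ) ⊗ₖ ((√k : ℂ)⁻¹ • dftMatrix k) ∈
      unitaryGroup (Fin p × ZMod k) ℂ :=
    kronecker_mem_unitary (one_mem _) inv_sqrt_smul_dftMatrix_mem_unitaryGroup
  rw [← l2_opNorm_map_ofReal]
  refine (l2_opNorm_eq_of_mul_eq_mul_of_mem_unitaryGroup hU hU ?_).symm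
  rw [kronecker_smul, kronecker_smul, Matrix.smul_mul, Matrix.mul_smul, one_kronecker_dftMatrix_mul_bcirc]

end TProduct

/-- The tensor spectral norm equals the spectral norm of the block circulant
representation, and also the spectral norm of the block diagonal matrix of the
frontal slices of the DFT along the third mode. -/
theorem tSpec_eq_bcirc_eq_blkdiag {k m n : ℕ} [NeZero k]
    (X : Fin m → Fin n → ZMod k → ℝ) :
    tSpec X = matSpec (bcirc X) ∧ tSpec X = matSpec (blkdiag X) :=
  ⟨TProduct.tSpec_eq_matSpec_bcirc X,
    (TProduct.tSpec_eq_matSpec_bcirc X).trans (TProduct.matSpec_blkdiag X).symm⟩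
end

section
/- Orthogonal tensors preserve the tensor Frobenius norm: if Q ∈ ℝ^{n×n×k} satisfies Q† * Q = I (t-product orthogonality), then for every T ∈ ℝ^{n×m×k}, ‖Q * T‖_F = ‖T‖_F. -/
open scoped BigOperators

/-- Tensor transpose. -/
def tTrans {k m n : ℕ} (T : Fin m → Fin n → ZMod k → ℝ) :
    Fin n → Fin m → ZMod k → ℝ :=
  fun j i t => T i j (-t)

/-- The identity tensor. -/
def idT {k : ℕ} (n : ℕ) : Fin n → Fin n → ZMod k → ℝ :=
  fun i j t => if i = j ∧ t = 0 then 1 else 0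

/-- Orthogonal tensors preserve the tensor Frobenius norm: if `Q† * Q = I`,
then `‖Q * T‖_F = ‖T‖_F` for every tensor `T`. -/
theorem frob3_tProd_orthogonal {k n m : ℕ} [NeZero k]
    (Q : Fin n → Fin n → ZMod k → ℝ) (hQ : tProd (tTrans Q) Q = idT n)
    (T : Fin n → Fin m → ZMod k → ℝ) :
    frob3 (tProd Q T) = frob3 T := by
  have key : ∀ (s s' : Fin n) (d : ZMod k),
      (∑ i : Fin n, ∑ u : ZMod k, Q i s u * Q i s' (u + d)) =
        if s = s' ∧ d = 0 then 1 else 0 := by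
    intro s s' d
    have h := congrFun (congrFun (congrFun hQ s) s') d
    simp only [tProd, tubeConv, tTrans, idT] at h
    rw [← h]
    refine Finset.sum_congr rfl fun i _ => ?_
    refine Fintype.sum_equiv (Equiv.neg (ZMod k)) _ _ fun u => ?_
    simp [sub_neg_eq_add, add_comm]
  unfold frob3
  congr 1
  calc (∑ i : Fin n, ∑ j : Fin m, ∑ t : ZMod k, (tProd Q T i j t) ^ 2)
      = ∑ y : Fin n × Fin m × ZMod k × Fin n × Fin n × ZMod k × ZMod k,
          Q y.1 y.2.2.2.1 y.2.2.2.2.2.1 * T y.2.2.2.1 y.2.1 (y.2.2.1 - y.2.2.2.2.2.1) *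
          (Q y.1 y.2.2.2.2.1 y.2.2.2.2.2.2 * T y.2.2.2.2.1 y.2.1 (y.2.2.1 - y.2.2.2.2.2.2)) := by
        simp only [tProd, tubeConv, sq, Finset.sum_mul_sum, Fintype.sum_prod_type]
    _ = ∑ x : Fin m × Fin n × Fin n × ZMod k × ZMod k × Fin n × ZMod k,
          Q x.2.2.2.2.2.1 x.2.1 x.2.2.2.2.2.2 * Q x.2.2.2.2.2.1 x.2.2.1 (x.2.2.2.2.2.2 + x.2.2.2.1) *
          (T x.2.1 x.1 x.2.2.2.2.1 * T x.2.2.1 x.1 (x.2.2.2.2.1 - x.2.2.2.1)) := by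
        refine (Fintype.sum_equiv
          ⟨fun x => (x.2.2.2.2.2.1, x.1, x.2.2.2.2.1 + x.2.2.2.2.2.2, x.2.1, x.2.2.1,
              x.2.2.2.2.2.2, x.2.2.2.2.2.2 + x.2.2.2.1),
           fun y => (y.2.1, y.2.2.2.1, y.2.2.2.2.1, y.2.2.2.2.2.2 - y.2.2.2.2.2.1,
              y.2.2.1 - y.2.2.2.2.2.1, y.1, y.2.2.2.2.2.1),
           ?_, ?_⟩ _ _ fun x => ?_).symm
        · rintro ⟨j,s,s',d,τ,i,u⟩; simp
        · rintro ⟨i,j,t,s,s',u,u'⟩; simp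
        · obtain ⟨j,s,s',d,τ,i,u⟩ := x
          simp only [Equiv.coe_fn_mk]
          have h1 : τ + u - u = τ := by ring
          have h2 : τ + u - (u + d) = τ - d := by ring
          rw [h1, h2]; ring
    _ = ∑ j : Fin m, ∑ s : Fin n, ∑ s' : Fin n, ∑ d : ZMod k,
          (∑ i : Fin n, ∑ u : ZMod k, Q i s u * Q i s' (u + d)) *
          (∑ τ : ZMod k, T s j τ * T s' j (τ - d)) := by
        simp only [Fintype.sum_prod_type, Finset.sum_mul, Finset.mul_sum]
    _ = ∑ j : Fin m, ∑ s : Fin n, ∑ τ : ZMod k, (T s j τ) ^ 2 := by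
        simp [key, ite_and, Finset.sum_ite_eq, Finset.sum_ite_eq', sq]
    _ = ∑ i : Fin n, ∑ j : Fin m, ∑ t : ZMod k, (T i j t) ^ 2 := Finset.sum_comm
end
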